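/- Let {ε_k}_{k≥1} be a strictly decreasing sequence of positive reals with ε_k → 0, let {l_k} and {L_k} be sequences of positive integers with max{ l_{k+1}, ∑_{j=1}^{k-1} l_j L_j } ≤ ε_k ∑_{j=1}^{k} l_j L_j for all k, and define n_k := l'_k + t_k where l'_k = l_j when k = L_1 + ⋯ + L_{j−1} + q with 1 ≤ q ≤ L_j, and 0 ≤ t_k ≤ ε_j l_j in that case. Then lim_{k→∞} (n_1 + ⋯ + n_k)/(n_1 + ⋯ + n_{k−1}) = 1. -/

import Mathlib

open MeasureTheory Filter Topology BigOperators
open scoped ENNReal Classical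

noncomputable section

def shiftN {A : Type*} : (ℕ → A) → (ℕ → A) := fun x n => x (n + 1)

def shiftZ {A : Type*} : (ℤ → A) → (ℤ → A) := fun x n => x (n + 1)

/-!
Index `k` lies in block `j + 1` when `L₁ + ⋯ + L_j < k ≤ L₁ + ⋯ + L_{j+1}`. Up to the end of
block `j` the partial sum of the `n_i` is at least `S_j = ∑_{i ≤ j} l_i L_i`, while inside block
`j + 1` each `n_k` is at most `(1 + ε_{j+1}) l_{j+1} ≤ (1 + ε_{j+1}) ε_j S_j`. So the last term
is an `O(ε_j)` fraction of the preceding partial sum, and the ratio of consecutive partial sums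
tends to `1`.
-/

open Finset

theorem Finset.sum_Icc_one_add {M : Type*} [AddCommMonoid M] (f : ℕ → M) (a b : ℕ) :
    ∑ i ∈ Icc 1 (a + b), f i = ∑ i ∈ Icc 1 a, f i + ∑ q ∈ Icc 1 b, f (a + q) := by
  induction b with
  | zero => simp
  | succ b ih =>
    rw [← add_assoc, sum_Icc_succ_top (by omega), ih, sum_Icc_succ_top (by omega), add_assoc]
    rfl

theorem Finset.sum_Icc_one_eq_sum_Icc_sub_one_add {M : Type*} [AddCommMonoid M] (f : ℕ → M)
    {k : ℕ} (hk : 1 ≤ k) : ∑ i ∈ Icc 1 k, f i = ∑ i ∈ Icc 1 (k - 1), f i + f k := by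
  obtain ⟨k, rfl⟩ := Nat.exists_eq_add_of_le' hk
  simp [sum_Icc_one_add]

theorem sum_Icc_one_cast_ne_zero {n : ℕ → ℕ} (h1 : n 1 ≠ 0) {k : ℕ} (hk : 1 ≤ k) :
    ∑ i ∈ Icc 1 k, (n i : ℝ) ≠ 0 := by
  have hle : (n 1 : ℝ) ≤ ∑ i ∈ Icc 1 k, (n i : ℝ) :=
    single_le_sum (f := fun i => (n i : ℝ)) (fun _ _ => by positivity) (mem_Icc.2 ⟨le_rfl, hk⟩)
  have hpos : (0 : ℝ) < n 1 := by positivity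
  linarith

theorem tendsto_add_div_self_atTop_one {α : Type*} {l : Filter α} {A a : α → ℝ}
    (hA : ∀ᶠ k in l, A k ≠ 0) (ha : Tendsto (fun k => a k / A k) l (𝓝 0)) :
    Tendsto (fun k => (A k + a k) / A k) l (𝓝 1) := by
  have h := (tendsto_const_nhds (x := (1 : ℝ))).add ha
  rw [add_zero] at h
  refine h.congr' (hA.mono fun k hk => ?_)
  change _ = (A k + a k) / A k
  rw [add_div, div_self hk]

/-- The block containing `k` is block `blockIndex T k + 1`, where block `j` is `(T (j-1), T j]`. -/
def blockIndex (T : ℕ → ℕ) (k : ℕ) : ℕ := Nat.findGreatest (fun j => T j < k) k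

section blockIndex

variable {T : ℕ → ℕ} {k : ℕ}

theorem blockIndex_lt (hk : T 0 < k) : T (blockIndex T k) < k :=
  Nat.findGreatest_spec (P := fun j => T j < k) (Nat.zero_le k) hk

theorem le_blockIndex (hT : ∀ j, j ≤ T j) {J : ℕ} (hJ : T J < k) : J ≤ blockIndex T k :=
  Nat.le_findGreatest (P := fun j => T j < k) ((hT J).trans hJ.le) hJ

theorem le_blockIndex_succ (hT : ∀ j, j ≤ T j) : k ≤ T (blockIndex T k + 1) := by
  by_contra! h
  have := le_blockIndex hT h
  omega

theorem tendsto_blockIndex (hT : ∀ j, j ≤ T j) : Tendsto (blockIndex T) atTop atTop :=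
  tendsto_atTop_atTop.2 fun J => ⟨T J + 1, fun _ hk => le_blockIndex hT (by omega)⟩

end blockIndex

def blockEnd (L : ℕ → ℕ) (j : ℕ) : ℕ := ∑ i ∈ Icc 1 j, L i

section blockEnd

variable {l L : ℕ → ℕ}

@[simp]
theorem blockEnd_zero : blockEnd L 0 = 0 := rfl

theorem blockEnd_succ (j : ℕ) : blockEnd L (j + 1) = blockEnd L j + L (j + 1) :=
  sum_Icc_succ_top (by omega) L

theorem le_blockEnd (hL : ∀ j, 1 ≤ L j) (j : ℕ) : j ≤ blockEnd L j := by
  induction j with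
  | zero => simp
  | succ j ih => have := hL (j + 1); rw [blockEnd_succ]; omega

theorem sum_mul_le_sum_Icc_blockEnd {a : ℕ → ℝ}
    (ha : ∀ j ≥ 1, ∀ q, 1 ≤ q → q ≤ L j → (l j : ℝ) ≤ a (blockEnd L (j - 1) + q)) (m : ℕ) :
    ∑ j ∈ Icc 1 m, (l j : ℝ) * L j ≤ ∑ i ∈ Icc 1 (blockEnd L m), a i := by
  induction m with
  | zero => simp
  | succ m ih =>
    rw [sum_Icc_succ_top (by omega), blockEnd_succ, sum_Icc_one_add]
    have hblock : ∑ _q ∈ Icc 1 (L (m + 1)), (l (m + 1) : ℝ)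
        ≤ ∑ q ∈ Icc 1 (L (m + 1)), a (blockEnd L m + q) :=
      sum_le_sum fun q hq => ha (m + 1) (by omega) q (mem_Icc.1 hq).1 (mem_Icc.1 hq).2
    rw [sum_const, Nat.card_Icc, add_tsub_cancel_right, nsmul_eq_mul] at hblock
    linarith

theorem div_sum_Icc_sub_one_le_mul {n : ℕ → ℕ} {m k : ℕ} {c δ : ℝ} (hl : ∀ j, 1 ≤ l j)
    (hL : ∀ j, 1 ≤ L j) (hm : 1 ≤ m)
    (hlow : ∀ j ≥ 1, ∀ q, 1 ≤ q → q ≤ L j → (l j : ℝ) ≤ n (blockEnd L (j - 1) + q))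
    (hk : blockEnd L m < k) (hc : 0 ≤ c) (hnk : (n k : ℝ) ≤ c * l (m + 1))
    (hδ : (l (m + 1) : ℝ) ≤ δ * ∑ j ∈ Icc 1 m, (l j : ℝ) * L j) :
    (n k : ℝ) / ∑ i ∈ Icc 1 (k - 1), (n i : ℝ) ≤ c * δ := by
  set S := ∑ j ∈ Icc 1 m, (l j : ℝ) * L j
  have hS : 0 < S := sum_pos (fun j _ => mul_pos (by exact_mod_cast hl j)
    (by exact_mod_cast hL j)) (nonempty_Icc.2 hm)
  have hSA : S ≤ ∑ i ∈ Icc 1 (k - 1), (n i : ℝ) :=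
    (sum_mul_le_sum_Icc_blockEnd hlow m).trans <|
      sum_le_sum_of_subset_of_nonneg (Icc_subset_Icc_right (by omega)) fun _ _ _ => by positivity
  calc (n k : ℝ) / ∑ i ∈ Icc 1 (k - 1), (n i : ℝ) ≤ n k / S :=
        div_le_div_of_nonneg_left (by positivity) hS hSA
    _ ≤ c * δ := by
        rw [div_le_iff₀ hS, mul_assoc]
        exact hnk.trans (mul_le_mul_of_nonneg_left hδ hc)

theorem eventually_div_sum_Icc_sub_one_le {ε : ℕ → ℝ} {n : ℕ → ℕ} (hl : ∀ j, 1 ≤ l j)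
    (hL : ∀ j, 1 ≤ L j) (hε : ∀ j ≥ 1, 0 ≤ ε j)
    (hlow : ∀ j ≥ 1, ∀ q, 1 ≤ q → q ≤ L j → (l j : ℝ) ≤ n (blockEnd L (j - 1) + q))
    (hup : ∀ j ≥ 1, ∀ q, 1 ≤ q → q ≤ L j → (n (blockEnd L (j - 1) + q) : ℝ) ≤ (1 + ε j) * l j)
    (hgrowth : ∀ m ≥ 1, (l (m + 1) : ℝ) ≤ ε m * ∑ j ∈ Icc 1 m, (l j : ℝ) * L j) :
    ∀ᶠ k in atTop, (n k : ℝ) / ∑ i ∈ Icc 1 (k - 1), (n i : ℝ) ≤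
      (1 + ε (blockIndex (blockEnd L) k + 1)) * ε (blockIndex (blockEnd L) k) := by
  have hT := le_blockEnd hL
  filter_upwards [eventually_gt_atTop (blockEnd L 1)] with k hk
  have hm : 1 ≤ blockIndex (blockEnd L) k := le_blockIndex hT hk
  have hlo := blockIndex_lt (T := blockEnd L) (k := k) (by rw [blockEnd_zero]; omega)
  have hhi := le_blockIndex_succ (k := k) hT
  generalize blockIndex (blockEnd L) k = m at hm hlo hhi ⊢
  rw [blockEnd_succ] at hhi
  have hnk := hup (m + 1) (by omega) (k - blockEnd L m) (by omega) (by omega)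
  rw [add_tsub_cancel_right, Nat.add_sub_cancel' hlo.le] at hnk
  exact div_sum_Icc_sub_one_le_mul hl hL hm hlow hlo
    (by linarith [hε (m + 1) (by omega)]) hnk (hgrowth m hm)

theorem tendsto_div_sum_Icc_sub_one {ε : ℕ → ℝ} {n : ℕ → ℕ} (hl : ∀ j, 1 ≤ l j)
    (hL : ∀ j, 1 ≤ L j) (hε : ∀ j ≥ 1, 0 ≤ ε j) (hε0 : Tendsto ε atTop (𝓝 0))
    (hlow : ∀ j ≥ 1, ∀ q, 1 ≤ q → q ≤ L j → (l j : ℝ) ≤ n (blockEnd L (j - 1) + q))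
    (hup : ∀ j ≥ 1, ∀ q, 1 ≤ q → q ≤ L j → (n (blockEnd L (j - 1) + q) : ℝ) ≤ (1 + ε j) * l j)
    (hgrowth : ∀ m ≥ 1, (l (m + 1) : ℝ) ≤ ε m * ∑ j ∈ Icc 1 m, (l j : ℝ) * L j) :
    Tendsto (fun k => (n k : ℝ) / ∑ i ∈ Icc 1 (k - 1), (n i : ℝ)) atTop (𝓝 0) := by
  have hbound : Tendsto (fun m => (1 + ε (m + 1)) * ε m) atTop (𝓝 0) := by
    simpa using (tendsto_const_nhds.add (hε0.comp (tendsto_add_atTop_nat 1))).mul hε0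
  exact tendsto_of_tendsto_of_tendsto_of_le_of_le' tendsto_const_nhds
    (hbound.comp (tendsto_blockIndex (le_blockEnd hL)))
    (Eventually.of_forall fun _ => by positivity)
    (eventually_div_sum_Icc_sub_one_le hl hL hε hlow hup hgrowth)

end blockEnd

theorem stmt12_general (εs : ℕ → ℝ) (l L n : ℕ → ℕ)
    (hεpos : ∀ k ≥ 1, 0 < εs k)
    (hε0 : Tendsto εs atTop (𝓝 0))
    (hl : ∀ k, 1 ≤ l k) (hL : ∀ k, 1 ≤ L k)
    (hLcond : ∀ k ≥ 1,
      max ((l (k + 1) : ℝ)) (∑ j ∈ Finset.Icc 1 (k - 1), (l j : ℝ) * (L j : ℝ)) ≤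
        εs k * ∑ j ∈ Finset.Icc 1 k, (l j : ℝ) * (L j : ℝ))
    (hn : ∀ k ≥ 1, ∀ j ≥ 1, ∀ q : ℕ, 1 ≤ q → q ≤ L j →
      k = (∑ i ∈ Finset.Icc 1 (j - 1), L i) + q →
      ∃ t : ℕ, n k = l j + t ∧ (t : ℝ) ≤ εs j * (l j : ℝ)) :
    Tendsto (fun k : ℕ =>
        (∑ i ∈ Finset.Icc 1 k, (n i : ℝ)) / (∑ i ∈ Finset.Icc 1 (k - 1), (n i : ℝ)))
      atTop (𝓝 1) := by
  have hbounds : ∀ j ≥ 1, ∀ q, 1 ≤ q → q ≤ L j → (l j : ℝ) ≤ n (blockEnd L (j - 1) + q) ∧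
      (n (blockEnd L (j - 1) + q) : ℝ) ≤ (1 + εs j) * l j := by
    intro j hj q hq hqL
    obtain ⟨t, ht, htε⟩ : ∃ t : ℕ, n (blockEnd L (j - 1) + q) = l j + t ∧ _ :=
      hn _ (by omega) j hj q hq hqL rfl
    rw [ht, Nat.cast_add]
    constructor <;> linarith [(Nat.cast_nonneg t : (0 : ℝ) ≤ t)]
  have hratio := tendsto_div_sum_Icc_sub_one hl hL (fun j hj => (hεpos j hj).le) hε0
    (fun j hj q hq hqL => (hbounds j hj q hq hqL).1)
    (fun j hj q hq hqL => (hbounds j hj q hq hqL).2)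
    (fun m hm => (le_max_left _ _).trans (hLcond m hm))
  have hn1 : n 1 ≠ 0 := by
    have h := (hbounds 1 le_rfl 1 le_rfl (hL 1)).1
    simp only [tsub_self, blockEnd_zero, zero_add, Nat.cast_le] at h
    have := hl 1
    omega
  refine (tendsto_add_div_self_atTop_one ?_ hratio).congr' ?_
  · filter_upwards [eventually_ge_atTop 2] with k hk using sum_Icc_one_cast_ne_zero hn1 (by omega)
  · filter_upwards [eventually_ge_atTop 1] with k hk
    rw [sum_Icc_one_eq_sum_Icc_sub_one_add _ hk]

/-- the bookkeeping estimate `(n₁ + ⋯ + n_k)/(n₁ + ⋯ + n_{k-1}) → 1` for block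
lengths `n_k = l'_k + t_k` with `t_k ≤ ε_j l_j` in block `j`, under the growth condition on `L`. -/
theorem stmt12 (εs : ℕ → ℝ) (l L n : ℕ → ℕ)
    (hεpos : ∀ k ≥ 1, 0 < εs k) (hεanti : ∀ k ≥ 1, εs (k + 1) < εs k)
    (hε0 : Tendsto εs atTop (𝓝 0))
    (hl : ∀ k, 1 ≤ l k) (hL : ∀ k, 1 ≤ L k)
    (hLcond : ∀ k ≥ 1,
      max ((l (k + 1) : ℝ)) (∑ j ∈ Finset.Icc 1 (k - 1), (l j : ℝ) * (L j : ℝ)) ≤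
        εs k * ∑ j ∈ Finset.Icc 1 k, (l j : ℝ) * (L j : ℝ))
    (hn : ∀ k ≥ 1, ∀ j ≥ 1, ∀ q : ℕ, 1 ≤ q → q ≤ L j →
      k = (∑ i ∈ Finset.Icc 1 (j - 1), L i) + q →
      ∃ t : ℕ, n k = l j + t ∧ (t : ℝ) ≤ εs j * (l j : ℝ)) :
    Tendsto (fun k : ℕ =>
        (∑ i ∈ Finset.Icc 1 k, (n i : ℝ)) / (∑ i ∈ Finset.Icc 1 (k - 1), (n i : ℝ)))
      atTop (𝓝 1) :=
  stmt12_general εs l L n hεpos hε0 hl hL hLcond hn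

end
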